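/- For every complex number x, ∑_{ν ∈ ℤ} J_{4ν}(x) = cos²(x/2), ∑_{ν ∈ ℤ} J_{4ν+1}(x) = (1/2) sin x, ∑_{ν ∈ ℤ} J_{4ν+2}(x) = sin²(x/2), and ∑_{ν ∈ ℤ} J_{4ν+3}(x) = −(1/2) sin x. -/

import Mathlib

open scoped Real

/-- Bessel function of the first kind of natural order `n`, via its power series. -/
noncomputable def besselJNat (n : ℕ) (x : ℂ) : ℂ :=
  ∑' m : ℕ, (-1 : ℂ) ^ m / ((m.factorial : ℂ) * ((m + n).factorial : ℂ)) * (x / 2) ^ (2 * m + n)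

/-- Bessel function of the first kind of integer order, with `J_{-n} = (-1)^n J_n`. -/
noncomputable def besselJ (n : ℤ) (x : ℂ) : ℂ :=
  if 0 ≤ n then besselJNat n.toNat x else (-1 : ℂ) ^ n.natAbs * besselJNat n.natAbs x

/-!
Multiplying the exponential series of `x t / 2` and `-x / (2 t)` and regrouping by the power
of `t` gives the generating function `∑ₙ Jₙ(x) tⁿ = exp (x (t - t⁻¹) / 2)` for every `t ≠ 0`.
If `t ^ 4 = 1`, the powers `tⁿ` only depend on `n mod 4`, so the generating function at
`t = 1, -1, I, -I` gives four linear equations for the four sums `∑_ν J_{4ν+r}(x)`, with right-hand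
sides `1, 1, exp (I x), exp (-I x)`; solving them gives the half-angle expressions.
-/

open Complex

theorem HasSum.sum_tsum_residue_mul_pow {K : Type*} [NormedField K] [CompleteSpace K]
    {f : ℤ → K} {t a : K} {d : ℕ} [NeZero d]
    (hf : HasSum (fun n : ℤ => f n * t ^ n) a) (ht : t ^ d = 1) :
    ∑ r : Fin d, (∑' ν : ℤ, f (ν * d + r)) * t ^ (r : ℕ) = a := by
  have ht0 : t ≠ 0 := by
    rintro rfl
    simp [NeZero.ne d] at ht
  have hpow (ν : ℤ) (r : Fin d) : t ^ (ν * d + r) = t ^ (r : ℕ) := by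
    rw [zpow_add₀ ht0, mul_comm ν, zpow_mul, zpow_natCast, ht, one_zpow, one_mul, zpow_natCast]
  have hres := (Equiv.prodComm _ _).hasSum_iff.2 ((Int.divModEquiv d).symm.hasSum_iff.2 hf)
  refine (hasSum_fintype _).unique (hres.prod_fiberwise fun r => ?_)
  simpa only [Function.comp_apply, Equiv.prodComm_apply, Prod.swap_prod_mk,
    Int.divModEquiv_symm_apply, hpow, tsum_mul_right] using (hres.summable.prod_factor r).hasSum

lemma besselJ_natCast (p : ℕ) (x : ℂ) : besselJ p x = besselJNat p x := by
  simp [besselJ]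

lemma besselJ_neg_natCast (p : ℕ) (x : ℂ) : besselJ (-p) x = (-1) ^ p * besselJNat p x := by
  rcases p.eq_zero_or_pos with rfl | hp
  · simp [besselJ]
  · rw [besselJ, if_neg (by omega), Int.natAbs_neg, Int.natAbs_natCast]

def natPairEquivSubMin : ℕ × ℕ ≃ ℤ × ℕ where
  toFun q := ((q.1 : ℤ) - q.2, min q.1 q.2)
  invFun p := (p.2 + p.1.toNat, p.2 + (-p.1).toNat)
  left_inv := fun ⟨a, b⟩ => by
    simp only [Prod.mk.injEq]
    omega
  right_inv := fun ⟨n, m⟩ => by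
    simp only [Prod.mk.injEq]
    omega

/-- The double series of `exp (x t / 2) * exp (-x / (2 t))`. Its term of index `(a, b)` is a
multiple of `t ^ (a - b)`, so it is regrouped along `natPairEquivSubMin`. -/
noncomputable def besselGenTerm (x t : ℂ) (q : ℕ × ℕ) : ℂ :=
  (x * t / 2) ^ q.1 / q.1.factorial * ((-(x * t⁻¹) / 2) ^ q.2 / q.2.factorial)

lemma hasSum_besselGenTerm (x t : ℂ) :
    HasSum (besselGenTerm x t) (exp (x * (t - t⁻¹) / 2)) := by
  have hexp (z : ℂ) : HasSum (fun k : ℕ => z ^ k / k.factorial) (exp z) := by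
    rw [exp_eq_exp_ℂ]
    exact NormedSpace.expSeries_div_hasSum_exp z
  have hs (z : ℂ) : Summable fun k : ℕ => ‖z ^ k / k.factorial‖ :=
    NormedSpace.norm_expSeries_div_summable z
  have hprod := summable_mul_of_summable_norm (hs (x * t / 2)) (hs (-(x * t⁻¹) / 2))
  have h := (hexp (x * t / 2)).mul (hexp (-(x * t⁻¹) / 2)) hprod
  rw [show x * (t - t⁻¹) / 2 = x * t / 2 + -(x * t⁻¹) / 2 by ring, exp_add]
  exact h

lemma besselGenTerm_swap (x t : ℂ) (a b : ℕ) :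
    besselGenTerm x t (a, b) = besselGenTerm x (-t⁻¹) (b, a) := by
  simp only [besselGenTerm, inv_neg, inv_inv]
  ring

lemma besselGenTerm_add_left (x : ℂ) {t : ℂ} (ht : t ≠ 0) (p m : ℕ) :
    besselGenTerm x t (m + p, m) =
      (-1 : ℂ) ^ m / (m.factorial * (m + p).factorial) * (x / 2) ^ (2 * m + p) * t ^ p := by
  have hcancel : t⁻¹ ^ m * t ^ (m + p) = t ^ p := by
    rw [pow_add, inv_pow, inv_mul_cancel_left₀ (pow_ne_zero m ht)]
  rw [← hcancel]
  simp only [besselGenTerm, neg_div, neg_pow (x * t⁻¹ / 2), div_pow, mul_pow]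
  ring

lemma tsum_besselGenTerm_add_left (x : ℂ) {t : ℂ} (ht : t ≠ 0) (p : ℕ) :
    ∑' m : ℕ, besselGenTerm x t (m + p, m) = besselJNat p x * t ^ p := by
  simp only [besselGenTerm_add_left x ht, tsum_mul_right, besselJNat]

lemma tsum_besselGenTerm_fiber (x : ℂ) {t : ℂ} (ht : t ≠ 0) (n : ℤ) :
    ∑' m : ℕ, besselGenTerm x t (natPairEquivSubMin.symm (n, m)) = besselJ n x * t ^ n := by
  obtain ⟨p, rfl | rfl⟩ := n.eq_nat_or_neg
  · have hfib (m : ℕ) : natPairEquivSubMin.symm (p, m) = (m + p, m) := by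
      simp [natPairEquivSubMin]
    simp only [hfib, tsum_besselGenTerm_add_left x ht, besselJ_natCast, zpow_natCast]
  · have hfib (m : ℕ) : natPairEquivSubMin.symm (-p, m) = (m, m + p) := by
      simp [natPairEquivSubMin]
    rw [tsum_congr fun m => by rw [hfib, besselGenTerm_swap]]
    rw [tsum_besselGenTerm_add_left x (neg_ne_zero.2 (inv_ne_zero ht)), besselJ_neg_natCast,
      zpow_neg, zpow_natCast, neg_pow, inv_pow]
    ring

theorem hasSum_besselJ_mul_zpow (x : ℂ) {t : ℂ} (ht : t ≠ 0) :
    HasSum (fun n : ℤ => besselJ n x * t ^ n) (exp (x * (t - t⁻¹) / 2)) := by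
  have h := natPairEquivSubMin.symm.hasSum_iff.2 (hasSum_besselGenTerm x t)
  refine h.prod_fiberwise fun n => ?_
  rw [← tsum_besselGenTerm_fiber x ht n]
  exact (h.summable.prod_factor n).hasSum

lemma tsum_besselJ_residues_mod_four (x : ℂ) {t : ℂ} (ht : t ^ 4 = 1) :
    (∑' ν : ℤ, besselJ (4 * ν) x) + (∑' ν : ℤ, besselJ (4 * ν + 1) x) * t
      + (∑' ν : ℤ, besselJ (4 * ν + 2) x) * t ^ 2 + (∑' ν : ℤ, besselJ (4 * ν + 3) x) * t ^ 3
      = exp (x * (t - t⁻¹) / 2) := by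
  have ht0 : t ≠ 0 := by
    rintro rfl
    norm_num at ht
  rw [← (hasSum_besselJ_mul_zpow x ht0).sum_tsum_residue_mul_pow ht, Fin.sum_univ_four]
  simp [mul_comm]

theorem stmt_7 (x : ℂ) :
    (∑' ν : ℤ, besselJ (4 * ν) x = Complex.cos (x / 2) ^ 2) ∧
    (∑' ν : ℤ, besselJ (4 * ν + 1) x = (1 / 2) * Complex.sin x) ∧
    (∑' ν : ℤ, besselJ (4 * ν + 2) x = Complex.sin (x / 2) ^ 2) ∧
    (∑' ν : ℤ, besselJ (4 * ν + 3) x = -((1 / 2) * Complex.sin x)) := by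
  have h1 := tsum_besselJ_residues_mod_four x (t := 1) (by norm_num)
  have h2 := tsum_besselJ_residues_mod_four x (t := -1) (by norm_num)
  have h3 := tsum_besselJ_residues_mod_four x I_pow_four
  have h4 := tsum_besselJ_residues_mod_four x (t := -I) (by rw [neg_pow, I_pow_four]; norm_num)
  rw [show x * (I - I⁻¹) / 2 = x * I by rw [inv_I]; ring, exp_mul_I] at h3
  rw [show x * (-I - (-I)⁻¹) / 2 = -x * I by rw [inv_neg, inv_I]; ring, exp_mul_I, cos_neg,
    sin_neg] at h4
  norm_num [pow_three, I_mul_I] at h1 h2 h3 h4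
  have hcos := cos_sq (x / 2)
  have hsin := sin_sq (x / 2)
  rw [mul_div_cancel₀ x two_ne_zero] at hcos
  have hodd : ∑' ν : ℤ, besselJ (4 * ν + 1) x - ∑' ν : ℤ, besselJ (4 * ν + 3) x = sin x :=
    mul_right_cancel₀ I_ne_zero (by linear_combination (h3 - h4) / 2)
  refine ⟨?_, ?_, ?_, ?_⟩
  · linear_combination (h1 + h2 + h3 + h4) / 4 - hcos
  · linear_combination (h1 - h2) / 4 + hodd / 2
  · linear_combination (h1 + h2 - h3 - h4) / 4 - hsin + hcos
  · linear_combination (h1 - h2) / 4 - hodd / 2
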